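/- For every k ≥ 1, every r ≤ k, and every vertex v of the generation U_r, the degree of v in the Apollonian network G_k equals 3·2^(k-r) if r > 1, and equals 2^(k-1) + 1 if r = 1. -/

import Mathlib

/-- A family of Apollonian networks, given by a vertex set `Vert` together with a
generation labeling `gen` and an adjacency relation `adj`, satisfying the recursive
construction: the first generation `U₁` consists of three pairwise adjacent vertices
(forming `G₁`); and for each `k ≥ 1`, for each vertex `u` of generation `k` and each
adjacent pair `{x, y}` of neighbors of `u` in `G_k`, exactly one new vertex of
generation `k + 1` is created, adjacent to exactly `u`, `x`, and `y`.
The `k`-th Apollonian network `G_k` is the induced subgraph on the vertices of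
generation at most `k`. -/
structure ApollonianNetwork where
  Vert : Type
  adj : Vert → Vert → Prop
  adj_symm : ∀ a b, adj a b → adj b a
  adj_irrefl : ∀ a, ¬ adj a a
  gen : Vert → ℕ
  gen_pos : ∀ v, 1 ≤ gen v
  /-- The first generation consists of exactly three vertices. -/
  U1_card : ∃ a b c : Vert, a ≠ b ∧ a ≠ c ∧ b ≠ c ∧ {v | gen v = 1} = {a, b, c}
  /-- `G₁` is a complete graph on the first generation. -/
  U1_complete : ∀ a b, gen a = 1 → gen b = 1 → a ≠ b → adj a b
  /-- All edges join vertices of distinct generations, except within generation 1. -/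
  adj_gen : ∀ a b, adj a b → gen a = gen b → gen a = 1
  /-- Every vertex `v` of generation `k ≥ 2` is adjacent, among the vertices of earlier
  generations, to exactly three vertices `u`, `x`, `y`, where `u` has generation `k - 1`
  and `x`, `y` are neighbors of `u` in `G_{k-1}` that are adjacent to each other. -/
  created : ∀ v, 2 ≤ gen v → ∃ u x y,
    gen u = gen v - 1 ∧ gen x ≤ gen v - 1 ∧ gen y ≤ gen v - 1 ∧
    adj u x ∧ adj u y ∧ adj x y ∧
    {w | adj v w ∧ gen w < gen v} = {u, x, y}
  /-- For each `k ≥ 1`, each vertex `u` of generation `k`, and each adjacent pair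
  `{x, y}` of neighbors of `u` in `G_k`, there is exactly one vertex of generation
  `k + 1` whose neighbors in `G_{k+1}` are exactly `u`, `x`, and `y`. -/
  attach : ∀ k, 1 ≤ k → ∀ u x y,
    gen u = k → gen x ≤ k → gen y ≤ k → x ≠ y →
    adj u x → adj u y → adj x y →
    ∃! v, gen v = k + 1 ∧ {w | adj v w ∧ gen w ≤ k} = ({u, x, y} : Set Vert)

/-- The `k`-th Apollonian network `G_k`: the induced subgraph on the vertices of
generation at most `k`. -/
def ApollonianNetwork.G (A : ApollonianNetwork) (k : ℕ) :
    SimpleGraph {v : A.Vert // A.gen v ≤ k} where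
  Adj a b := A.adj a b
  symm := ⟨fun a b h => A.adj_symm a b h⟩
  loopless := ⟨fun a h => A.adj_irrefl a h⟩

/-!
A vertex `v` of generation `m + 1` is attached to a triangle `{u, x, y}` of `G_m` whose apex `u`
has generation `m`, and `v` is determined by that triangle. For `m ≥ 2` the neighbours of a
vertex `u` of generation `m` in `G_m` form a triangle `T`, and every child of `u` (neighbour of
generation `m + 1`) is adjacent to exactly two vertices of `T`; sending a child to the vertex of
`T` it misses is a bijection. So `u` has three children, and each `w ∈ T` is adjacent to exactly
two of them. Summing over the neighbours of generation `m` of an older vertex `w`, the number of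
neighbours of `w` in each new generation doubles. Starting from `3` new neighbours (or, for the
three vertices of `U₁`, from `2` and then `1`), the degree in `G_k` is a geometric sum.
-/

namespace ApollonianNetwork

variable {A : ApollonianNetwork}

def neighborsLE (A : ApollonianNetwork) (w : A.Vert) (k : ℕ) : Set A.Vert :=
  {z | A.adj w z ∧ A.gen z ≤ k}

def neighborsAt (A : ApollonianNetwork) (w : A.Vert) (m : ℕ) : Set A.Vert :=
  {z | A.adj w z ∧ A.gen z = m}

lemma ne_of_adj {a b : A.Vert} (h : A.adj a b) : a ≠ b :=
  fun e => A.adj_irrefl b (e ▸ h)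

lemma gen_ne_of_adj {a b : A.Vert} (h : A.adj a b) (ha : 2 ≤ A.gen a) : A.gen b ≠ A.gen a :=
  fun e => by have := A.adj_gen a b h e.symm; omega

lemma neighborsLE_succ (w : A.Vert) (k : ℕ) :
    A.neighborsLE w (k + 1) = A.neighborsLE w k ∪ A.neighborsAt w (k + 1) := by
  ext z
  simp only [neighborsLE, neighborsAt, Set.mem_union, Set.mem_ofPred_eq, Nat.le_succ_iff,
    and_or_left]

lemma disjoint_neighborsLE_neighborsAt (w : A.Vert) (k : ℕ) :
    Disjoint (A.neighborsLE w k) (A.neighborsAt w (k + 1)) :=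
  Set.disjoint_left.2 fun _ h h' => by have := h.2; have := h'.2; omega

lemma neighborsLE_eq_of_gen_eq (v : A.Vert) {m : ℕ} (hv : A.gen v = m + 1) :
    A.neighborsLE v m = {w | A.adj v w ∧ A.gen w < A.gen v} := by
  ext z
  simp only [neighborsLE, Set.mem_ofPred_eq, hv, Nat.lt_succ_iff]

lemma exists_neighborsLE_eq {v : A.Vert} {m : ℕ} (hm : 1 ≤ m) (hv : A.gen v = m + 1) :
    ∃ u x y, A.gen u = m ∧ A.gen x ≤ m ∧ A.gen y ≤ m ∧
      A.adj u x ∧ A.adj u y ∧ A.adj x y ∧ A.neighborsLE v m = {u, x, y} := by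
  obtain ⟨u, x, y, hu, hx, hy, hux, huy, hxy, hN⟩ := A.created v (by omega)
  rw [hv, Nat.add_sub_cancel] at hu hx hy
  exact ⟨u, x, y, hu, hx, hy, hux, huy, hxy, (neighborsLE_eq_of_gen_eq v hv).trans hN⟩

lemma neighborsLE_gen_eq_pred {u : A.Vert} {m : ℕ} (hm : 2 ≤ m) (hu : A.gen u = m) :
    A.neighborsLE u m = A.neighborsLE u (m - 1) := by
  ext z
  simp only [neighborsLE, Set.mem_ofPred_eq]
  refine ⟨fun ⟨h, hz⟩ => ⟨h, ?_⟩, fun ⟨h, hz⟩ => ⟨h, by omega⟩⟩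
  have := gen_ne_of_adj h (hu ▸ hm)
  omega

lemma exists_neighborsLE_self_eq {m : ℕ} (hm : 2 ≤ m) {u : A.Vert} (hu : A.gen u = m) :
    ∃ p q s, A.adj p q ∧ A.adj p s ∧ A.adj q s ∧ A.neighborsLE u m = {p, q, s} := by
  obtain ⟨p, q, s, -, -, -, hpq, hps, hqs, hN⟩ := exists_neighborsLE_eq (v := u) (m := m - 1)
    (by omega) (by omega)
  exact ⟨p, q, s, hpq, hps, hqs, (neighborsLE_gen_eq_pred hm hu).trans hN⟩

lemma ncard_neighborsLE_self {m : ℕ} (hm : 2 ≤ m) {u : A.Vert} (hu : A.gen u = m) :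
    (A.neighborsLE u m).ncard = 3 := by
  obtain ⟨p, q, s, hpq, hps, hqs, hN⟩ := exists_neighborsLE_self_eq hm hu
  exact Set.ncard_eq_three.2 ⟨p, q, s, ne_of_adj hpq, ne_of_adj hps, ne_of_adj hqs, hN⟩

lemma finite_neighborsLE_self {m : ℕ} (hm : 2 ≤ m) {u : A.Vert} (hu : A.gen u = m) :
    (A.neighborsLE u m).Finite :=
  Set.finite_of_ncard_ne_zero (by rw [ncard_neighborsLE_self hm hu]; norm_num)

lemma pairwise_adj_neighborsLE_self {m : ℕ} (hm : 2 ≤ m) {u : A.Vert} (hu : A.gen u = m) :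
    (A.neighborsLE u m).Pairwise A.adj := by
  obtain ⟨p, q, s, hpq, hps, hqs, hN⟩ := exists_neighborsLE_self_eq hm hu
  have : Std.Symm A.adj := ⟨A.adj_symm⟩
  simp [hN, Set.pairwise_insert_of_symm, hpq, hps, hqs]

lemma eq_of_neighborsLE_eq {m : ℕ} (hm : 1 ≤ m) {v v' : A.Vert} (hv : A.gen v = m + 1)
    (hv' : A.gen v' = m + 1) (h : A.neighborsLE v m = A.neighborsLE v' m) : v = v' := by
  obtain ⟨u, x, y, hu, hx, hy, hux, huy, hxy, hN⟩ := exists_neighborsLE_eq hm hv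
  obtain ⟨w, -, hw⟩ := A.attach m hm u x y hu hx hy (ne_of_adj hxy) hux huy hxy
  exact (hw v ⟨hv, hN⟩).trans (hw v' ⟨hv', h.symm.trans hN⟩).symm

lemma exists_parent {m : ℕ} (hm : 1 ≤ m) {v : A.Vert} (hv : A.gen v = m + 1) :
    ∃ u, A.gen u = m ∧ A.adj v u := by
  obtain ⟨u, _, _, hu, -, -, -, -, -, hN⟩ := exists_neighborsLE_eq hm hv
  have : u ∈ A.neighborsLE v m := by rw [hN]; exact Set.mem_insert u _
  exact ⟨u, hu, this.1⟩

lemma neighborsLE_eq_of_parent {m : ℕ} (hm : 2 ≤ m) {u v : A.Vert} (hu : A.gen u = m)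
    (hv : A.gen v = m + 1) (hvu : A.adj v u) :
    ∃ x y, x ≠ y ∧ x ∈ A.neighborsLE u m ∧ y ∈ A.neighborsLE u m ∧
      A.neighborsLE v m = {u, x, y} := by
  obtain ⟨t, x, y, ht, hx, hy, htx, hty, hxy, hN⟩ := exists_neighborsLE_eq (by omega) hv
  have hx' := gen_ne_of_adj htx (ht ▸ hm)
  have hy' := gen_ne_of_adj hty (ht ▸ hm)
  have hmem : u ∈ A.neighborsLE v m := ⟨hvu, hu.le⟩
  rw [hN] at hmem
  obtain rfl | rfl | rfl := hmem
  · exact ⟨x, y, ne_of_adj hxy, ⟨htx, hx⟩, ⟨hty, hy⟩, hN⟩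
  · omega
  · omega

lemma gen_lt_of_mem_neighborsLE {m : ℕ} (hm : 2 ≤ m) {u z : A.Vert} (hu : A.gen u = m)
    (hz : z ∈ A.neighborsLE u m) : A.gen z < m := by
  have := gen_ne_of_adj hz.1 (hu ▸ hm)
  have := hz.2
  omega

lemma eq_of_adj_of_gen_eq {m : ℕ} (hm : 2 ≤ m) {v u u' : A.Vert} (hv : A.gen v = m + 1)
    (hu : A.gen u = m) (hu' : A.gen u' = m) (hvu : A.adj v u) (hvu' : A.adj v u') : u' = u := by
  obtain ⟨x, y, -, hx, hy, hN⟩ := neighborsLE_eq_of_parent hm hu hv hvu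
  have hmem : u' ∈ A.neighborsLE v m := ⟨hvu', hu'.le⟩
  rw [hN] at hmem
  have := gen_lt_of_mem_neighborsLE hm hu hx
  have := gen_lt_of_mem_neighborsLE hm hu hy
  obtain rfl | rfl | rfl := hmem <;> first | rfl | omega

lemma neighborsLE_child_eq {m : ℕ} (hm : 2 ≤ m) {u v z : A.Vert} (hu : A.gen u = m)
    (hv : v ∈ A.neighborsAt u (m + 1)) (hz : z ∈ A.neighborsLE u m) (hvz : ¬ A.adj v z) :
    A.neighborsLE v m = insert u (A.neighborsLE u m \ {z}) := by
  obtain ⟨x, y, hxy, hx, hy, hN⟩ := neighborsLE_eq_of_parent hm hu hv.2 (A.adj_symm _ _ hv.1)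
  have hvx : A.adj v x := (hN ▸ Set.mem_insert_of_mem u (Set.mem_insert x {y}) :
    x ∈ A.neighborsLE v m).1
  have hvy : A.adj v y := (hN ▸ Set.mem_insert_of_mem u (Set.mem_insert_of_mem x rfl) :
    y ∈ A.neighborsLE v m).1
  rw [hN]
  congr 1
  refine Set.eq_of_subset_of_ncard_le ?_ ?_ (finite_neighborsLE_self hm hu).sdiff
  · rintro w (rfl | rfl)
    · exact ⟨hx, fun h => hvz (h ▸ hvx)⟩
    · exact ⟨hy, fun h => hvz (h ▸ hvy)⟩
  · rw [Set.ncard_sdiff_singleton_of_mem hz, ncard_neighborsLE_self hm hu,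
      Set.ncard_pair hxy]

lemma exists_child_not_adj {m : ℕ} (hm : 2 ≤ m) {u z : A.Vert} (hu : A.gen u = m)
    (hz : z ∈ A.neighborsLE u m) : ∃ v ∈ A.neighborsAt u (m + 1), ¬ A.adj v z := by
  have hcard : (A.neighborsLE u m \ {z}).ncard = 2 := by
    rw [Set.ncard_sdiff_singleton_of_mem hz, ncard_neighborsLE_self hm hu]
  obtain ⟨x, y, hxy, hN⟩ := Set.ncard_eq_two.1 hcard
  have hx : x ∈ A.neighborsLE u m \ {z} := hN ▸ Set.mem_insert x {y}
  have hy : y ∈ A.neighborsLE u m \ {z} := hN ▸ Set.mem_insert_of_mem x rfl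
  obtain ⟨v, ⟨hgv, hvN⟩, -⟩ :=
    A.attach m (by omega) u x y hu hx.1.2 hy.1.2 hxy hx.1.1 hy.1.1
    (pairwise_adj_neighborsLE_self hm hu hx.1 hy.1 hxy)
  have hvN' : A.neighborsLE v m = insert u (A.neighborsLE u m \ {z}) := by rw [hN]; exact hvN
  have hvu : u ∈ A.neighborsLE v m := hvN' ▸ Set.mem_insert u _
  refine ⟨v, ⟨A.adj_symm _ _ hvu.1, hgv⟩, fun hvz => ?_⟩
  have hzv : z ∈ A.neighborsLE v m := ⟨hvz, hz.2⟩
  rw [hvN'] at hzv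
  rcases hzv with rfl | ⟨-, hzz⟩
  · exact ne_of_adj hz.1 rfl
  · exact hzz rfl

lemma exists_not_adj_of_child {m : ℕ} (hm : 2 ≤ m) {u v : A.Vert} (hu : A.gen u = m)
    (hv : v ∈ A.neighborsAt u (m + 1)) : ∃ z ∈ A.neighborsLE u m, ¬ A.adj v z := by
  obtain ⟨x, y, hxy, -, -, hN⟩ := neighborsLE_eq_of_parent hm hu hv.2 (A.adj_symm _ _ hv.1)
  have hpos : (A.neighborsLE u m \ {x, y}).ncard ≠ 0 := by
    have := Set.le_ncard_sdiff {x, y} (A.neighborsLE u m)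
    rw [ncard_neighborsLE_self hm hu, Set.ncard_pair hxy] at this
    omega
  obtain ⟨z, hz, hzxy⟩ := Set.nonempty_of_ncard_ne_zero hpos
  refine ⟨z, hz, fun hvz => ?_⟩
  have hzv : z ∈ A.neighborsLE v m := ⟨hvz, hz.2⟩
  rw [hN] at hzv
  rcases hzv with rfl | hzxy'
  · exact ne_of_adj hz.1 rfl
  · exact hzxy hzxy'

lemma eq_of_not_adj_of_not_adj {m : ℕ} (hm : 2 ≤ m) {u v z z' : A.Vert} (hu : A.gen u = m)
    (hv : v ∈ A.neighborsAt u (m + 1)) (hz : z ∈ A.neighborsLE u m)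
    (hz' : z' ∈ A.neighborsLE u m) (hvz : ¬ A.adj v z) (hvz' : ¬ A.adj v z') : z' = z := by
  by_contra hne
  have : z' ∈ A.neighborsLE v m := by
    rw [neighborsLE_child_eq hm hu hv hz hvz]
    exact Set.mem_insert_of_mem u ⟨hz', hne⟩
  exact hvz' this.1

lemma child_eq_of_not_adj_of_not_adj {m : ℕ} (hm : 2 ≤ m) {u v v' z : A.Vert} (hu : A.gen u = m)
    (hv : v ∈ A.neighborsAt u (m + 1)) (hv' : v' ∈ A.neighborsAt u (m + 1))
    (hz : z ∈ A.neighborsLE u m) (hvz : ¬ A.adj v z) (hv'z : ¬ A.adj v' z) : v = v' :=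
  eq_of_neighborsLE_eq (by omega) hv.2 hv'.2 <| (neighborsLE_child_eq hm hu hv hz hvz).trans
    (neighborsLE_child_eq hm hu hv' hz hv'z).symm

lemma ncard_neighborsAt_succ_of_gen_eq {m : ℕ} (hm : 2 ≤ m) {u : A.Vert} (hu : A.gen u = m) :
    (A.neighborsAt u (m + 1)).ncard = 3 := by
  rw [← ncard_neighborsLE_self hm hu]
  symm
  refine Set.ncard_congr (fun z hz => (exists_child_not_adj hm hu hz).choose)
    (fun z hz => (exists_child_not_adj hm hu hz).choose_spec.1) ?_ ?_
  · intro z z' hz hz' h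
    have h1 := (exists_child_not_adj hm hu hz).choose_spec
    have h2 := (exists_child_not_adj hm hu hz').choose_spec
    rw [h] at h1
    exact eq_of_not_adj_of_not_adj hm hu h2.1 hz' hz h2.2 h1.2
  · intro v hv
    obtain ⟨z, hz, hvz⟩ := exists_not_adj_of_child hm hu hv
    have h := (exists_child_not_adj hm hu hz).choose_spec
    exact ⟨z, hz, child_eq_of_not_adj_of_not_adj hm hu h.1 hv hz h.2 hvz⟩

lemma ncard_neighborsAt_succ_adj {m : ℕ} (hm : 2 ≤ m) {u w : A.Vert} (hu : A.gen u = m)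
    (hw : w ∈ A.neighborsLE u m) : {v ∈ A.neighborsAt u (m + 1) | A.adj v w}.ncard = 2 := by
  obtain ⟨v₀, hv₀, hv₀w⟩ := exists_child_not_adj hm hu hw
  have : {v ∈ A.neighborsAt u (m + 1) | A.adj v w} = A.neighborsAt u (m + 1) \ {v₀} := by
    ext v
    refine ⟨fun ⟨hv, hvw⟩ => ⟨hv, fun h => hv₀w (h ▸ hvw)⟩,
      fun ⟨hv, hne⟩ => ⟨hv, ?_⟩⟩
    by_contra hvw
    exact hne (child_eq_of_not_adj_of_not_adj hm hu hv hv₀ hw hvw hv₀w)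
  rw [this, Set.ncard_sdiff_singleton_of_mem hv₀, ncard_neighborsAt_succ_of_gen_eq hm hu]

lemma neighborsAt_succ_eq_biUnion {m : ℕ} (hm : 2 ≤ m) {w : A.Vert} (hw : A.gen w < m) :
    A.neighborsAt w (m + 1) =
      ⋃ u ∈ A.neighborsAt w m, {v ∈ A.neighborsAt u (m + 1) | A.adj v w} := by
  ext v
  simp only [Set.mem_iUnion, exists_prop]
  constructor
  · rintro ⟨hwv, hv⟩
    obtain ⟨u, hu, hvu⟩ := exists_parent (by omega) hv
    obtain ⟨x, y, -, hx, hy, hN⟩ := neighborsLE_eq_of_parent hm hu hv hvu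
    have hwN : w ∈ A.neighborsLE v m := ⟨A.adj_symm _ _ hwv, hw.le⟩
    rw [hN] at hwN
    have huw : A.adj u w := by
      obtain rfl | rfl | rfl := hwN
      · omega
      · exact hx.1
      · exact hy.1
    exact ⟨u, ⟨A.adj_symm _ _ huw, hu⟩, ⟨A.adj_symm _ _ hvu, hv⟩, A.adj_symm _ _ hwv⟩
  · rintro ⟨u, -, ⟨-, hv⟩, hvw⟩
    exact ⟨A.adj_symm _ _ hvw, hv⟩

lemma pairwiseDisjoint_neighborsAt_succ_adj {m : ℕ} (hm : 2 ≤ m) (w : A.Vert) :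
    (A.neighborsAt w m).PairwiseDisjoint
      fun u => {v ∈ A.neighborsAt u (m + 1) | A.adj v w} := by
  intro u hu u' hu' hne
  refine Set.disjoint_left.2 fun v ⟨⟨huv, hv⟩, _⟩ ⟨⟨hu'v, _⟩, _⟩ => hne ?_
  exact eq_of_adj_of_gen_eq hm hv hu'.2 hu.2 (A.adj_symm _ _ hu'v) (A.adj_symm _ _ huv)

lemma ncard_neighborsAt_succ_of_gen_lt {m : ℕ} (hm : 2 ≤ m) {w : A.Vert} (hw : A.gen w < m)
    (hfin : (A.neighborsAt w m).Finite) :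
    (A.neighborsAt w (m + 1)).ncard = 2 * (A.neighborsAt w m).ncard := by
  have hcard : ∀ u ∈ A.neighborsAt w m, {v ∈ A.neighborsAt u (m + 1) | A.adj v w}.ncard = 2 :=
    fun u hu => ncard_neighborsAt_succ_adj hm hu.2 ⟨A.adj_symm _ _ hu.1, hw.le⟩
  rw [neighborsAt_succ_eq_biUnion hm hw, hfin.ncard_biUnion
    (fun u hu => Set.finite_of_ncard_ne_zero (by rw [hcard u hu]; norm_num))
    (pairwiseDisjoint_neighborsAt_succ_adj hm w), finsum_mem_congr rfl hcard, ← finsum_one,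
    mul_finsum_mem' _ _ hfin, mul_one]

lemma ncard_gen_eq_one : {v : A.Vert | A.gen v = 1}.ncard = 3 := by
  obtain ⟨a, b, c, hab, hac, hbc, hU⟩ := A.U1_card
  exact Set.ncard_eq_three.2 ⟨a, b, c, hab, hac, hbc, hU⟩

lemma ncard_neighborsAt_one {w : A.Vert} (hw : A.gen w = 1) : (A.neighborsAt w 1).ncard = 2 := by
  have : A.neighborsAt w 1 = {v | A.gen v = 1} \ {w} := by
    ext z
    exact ⟨fun ⟨h, hz⟩ => ⟨hz, (ne_of_adj h).symm⟩,
      fun ⟨hz, hne⟩ => ⟨A.U1_complete w z hw hz (Ne.symm hne), hz⟩⟩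
  rw [this, Set.ncard_sdiff_singleton_of_mem (show w ∈ {v | A.gen v = 1} from hw),
    ncard_gen_eq_one]

lemma neighborsLE_one_of_gen_eq_two {v : A.Vert} (hv : A.gen v = 2) :
    A.neighborsLE v 1 = {z | A.gen z = 1} := by
  obtain ⟨u, x, y, -, -, -, hux, huy, hxy, hN⟩ := exists_neighborsLE_eq le_rfl hv
  refine Set.eq_of_subset_of_ncard_le (fun z hz => le_antisymm hz.2 (A.gen_pos z)) ?_
    (Set.finite_of_ncard_ne_zero (by rw [ncard_gen_eq_one]; norm_num))
  rw [ncard_gen_eq_one, hN,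
    Set.ncard_eq_three.2 ⟨u, x, y, ne_of_adj hux, ne_of_adj huy, ne_of_adj hxy, rfl⟩]

lemma exists_gen_eq_two : ∃ d : A.Vert, A.gen d = 2 := by
  obtain ⟨a, b, c, hab, hac, hbc, hU⟩ := A.U1_card
  have hgen : ∀ z ∈ ({a, b, c} : Set A.Vert), A.gen z = 1 := fun z hz => by
    rw [← hU] at hz; exact hz
  have ha := hgen a (by simp)
  have hb := hgen b (by simp)
  have hc := hgen c (by simp)
  obtain ⟨d, ⟨hd, -⟩, -⟩ := A.attach 1 le_rfl a b c ha hb.le hc.le hbc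
    (A.U1_complete a b ha hb hab) (A.U1_complete a c ha hc hac) (A.U1_complete b c hb hc hbc)
  exact ⟨d, hd⟩

lemma ncard_neighborsAt_two {w : A.Vert} (hw : A.gen w = 1) : (A.neighborsAt w 2).ncard = 1 := by
  obtain ⟨d, hd⟩ := exists_gen_eq_two (A := A)
  have hdN := neighborsLE_one_of_gen_eq_two hd
  suffices A.neighborsAt w 2 = {d} by rw [this, Set.ncard_singleton]
  ext v
  refine ⟨fun ⟨_, hv⟩ => ?_, ?_⟩
  · exact eq_of_neighborsLE_eq le_rfl hv hd ((neighborsLE_one_of_gen_eq_two hv).trans hdN.symm)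
  · rintro rfl
    exact ⟨A.adj_symm _ _ (hdN ▸ hw : w ∈ A.neighborsLE v 1).1, hd⟩

lemma ncard_neighborsAt_of_two_le_gen {w : A.Vert} (hw : 2 ≤ A.gen w) (j : ℕ) :
    (A.neighborsAt w (A.gen w + j + 1)).ncard = 3 * 2 ^ j := by
  induction j with
  | zero => exact ncard_neighborsAt_succ_of_gen_eq hw rfl
  | succ j ih =>
    rw [show A.gen w + (j + 1) + 1 = A.gen w + j + 1 + 1 by ring,
      ncard_neighborsAt_succ_of_gen_lt (by omega) (by omega)
      (Set.finite_of_ncard_ne_zero (by rw [ih]; positivity)), ih, pow_succ]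
    ring

lemma ncard_neighborsAt_of_gen_eq_one {w : A.Vert} (hw : A.gen w = 1) (j : ℕ) :
    (A.neighborsAt w (j + 2)).ncard = 2 ^ j := by
  induction j with
  | zero => exact ncard_neighborsAt_two hw
  | succ j ih =>
    rw [show j + 1 + 2 = j + 2 + 1 by ring, ncard_neighborsAt_succ_of_gen_lt (by omega)
      (by omega) (Set.finite_of_ncard_ne_zero (by rw [ih]; positivity)), ih, pow_succ]
    ring

lemma ncard_neighborsLE_succ {w : A.Vert} {k : ℕ} (hle : (A.neighborsLE w k).Finite)
    (hat : (A.neighborsAt w (k + 1)).Finite) :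
    (A.neighborsLE w (k + 1)).ncard =
      (A.neighborsLE w k).ncard + (A.neighborsAt w (k + 1)).ncard := by
  rw [neighborsLE_succ, Set.ncard_union_eq (disjoint_neighborsLE_neighborsAt w k) hle hat]

lemma ncard_neighborsLE_of_two_le_gen {w : A.Vert} (hw : 2 ≤ A.gen w) (j : ℕ) :
    (A.neighborsLE w (A.gen w + j)).ncard = 3 * 2 ^ j := by
  induction j with
  | zero => exact ncard_neighborsLE_self hw rfl
  | succ j ih =>
    have hat := ncard_neighborsAt_of_two_le_gen hw j
    rw [← add_assoc, ncard_neighborsLE_succ (Set.finite_of_ncard_ne_zero (by rw [ih]; positivity))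
      (Set.finite_of_ncard_ne_zero (by rw [hat]; positivity)), ih, hat, pow_succ]
    ring

lemma ncard_neighborsLE_of_gen_eq_one {w : A.Vert} (hw : A.gen w = 1) (j : ℕ) :
    (A.neighborsLE w (j + 1)).ncard = 2 ^ j + 1 := by
  induction j with
  | zero =>
    have h0 : A.neighborsLE w 0 = ∅ :=
      Set.eq_empty_of_forall_notMem fun z hz => by have := A.gen_pos z; have := hz.2; omega
    rw [ncard_neighborsLE_succ (by simp [h0])
      (Set.finite_of_ncard_ne_zero (by rw [ncard_neighborsAt_one hw]; norm_num)), h0,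
      ncard_neighborsAt_one hw, Set.ncard_empty]
    norm_num
  | succ j ih =>
    have hat := ncard_neighborsAt_of_gen_eq_one hw j
    rw [ncard_neighborsLE_succ (Set.finite_of_ncard_ne_zero (by rw [ih]; positivity))
      (Set.finite_of_ncard_ne_zero (by rw [hat]; positivity)), ih, hat, pow_succ]
    ring

lemma image_val_neighborSet_G {k : ℕ} {v : A.Vert} (hv : A.gen v ≤ k) :
    Subtype.val '' (A.G k).neighborSet ⟨v, hv⟩ = A.neighborsLE v k := by
  ext z
  exact ⟨fun ⟨⟨z, hz⟩, hadj, e⟩ => e ▸ ⟨hadj, hz⟩,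
    fun ⟨hadj, hz⟩ => ⟨⟨z, hz⟩, hadj, rfl⟩⟩

end ApollonianNetwork

theorem stmt13_general (A : ApollonianNetwork) (k r : ℕ)
    (v : A.Vert) (hv : A.gen v = r) (hvk : A.gen v ≤ k) :
    ((A.G k).neighborSet ⟨v, hvk⟩).ncard =
      if r = 1 then 2 ^ (k - 1) + 1 else 3 * 2 ^ (k - r) := by
  rw [← Set.ncard_image_of_injective _ Subtype.val_injective,
    ApollonianNetwork.image_val_neighborSet_G]
  subst hv
  split_ifs with h1
  · obtain ⟨j, rfl⟩ : ∃ j, k = j + 1 := ⟨k - 1, by omega⟩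
    rw [ApollonianNetwork.ncard_neighborsLE_of_gen_eq_one h1, Nat.add_sub_cancel]
  · obtain ⟨j, rfl⟩ : ∃ j, k = A.gen v + j := ⟨k - A.gen v, by omega⟩
    rw [ApollonianNetwork.ncard_neighborsLE_of_two_le_gen (by have := A.gen_pos v; omega),
      Nat.add_sub_cancel_left]

theorem stmt13 (A : ApollonianNetwork) (k r : ℕ) (hk : 1 ≤ k) (hr : r ≤ k)
    (v : A.Vert) (hv : A.gen v = r) (hvk : A.gen v ≤ k) :
    ((A.G k).neighborSet ⟨v, hvk⟩).ncard =
      if r = 1 then 2 ^ (k - 1) + 1 else 3 * 2 ^ (k - r) :=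
  stmt13_general A k r v hv hvk
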